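/- arXiv:1803.06566 — 10 statements merged into one kernel-verified Lean document; each statement's English description precedes it below -/
import Mathlib

section
/- Let the sequence (t_k) be defined by t_1 = 1 and t_{k+1} = (1 + sqrt(1 + 4 t_k^2))/2 for k ≥ 1. Then for every k ≥ 1, (k+1)/2 ≤ t_k ≤ (5/8) k + 3/8 ≤ k. -/
theorem nesterov_step_bounds (t : ℕ → ℝ)
    (h1 : t 1 = 1)
    (hrec : ∀ k ≥ 1, t (k + 1) = (1 + Real.sqrt (1 + 4 * t k ^ 2)) / 2) :
    ∀ k : ℕ, 1 ≤ k → ((k : ℝ) + 1) / 2 ≤ t k ∧ t k ≤ 5 / 8 * (k : ℝ) + 3 / 8 ∧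
      5 / 8 * (k : ℝ) + 3 / 8 ≤ (k : ℝ) := by
  intro k hk
  induction k, hk using Nat.le_induction with
  | base => norm_num [h1]
  | succ n hn ih =>
    obtain ⟨hlo, hhi, _⟩ := ih
    have hn1 : (1 : ℝ) ≤ (n : ℝ) := by exact_mod_cast hn
    have ht0 : 0 ≤ t n := by linarith
    set s := Real.sqrt (1 + 4 * t n ^ 2) with hs
    have hs0 : 0 ≤ s := Real.sqrt_nonneg _
    have hs2 : s ^ 2 = 1 + 4 * t n ^ 2 := Real.sq_sqrt (by positivity)
    have hrec' := hrec n hn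
    push_cast
    refine ⟨?_, ?_, by linarith⟩
    · have : 2 * t n ≤ s := by nlinarith [sq_nonneg (s - 2 * t n)]
      rw [hrec']
      linarith
    · have : s ≤ 5 / 4 * (n : ℝ) + 1 := by
        nlinarith [sq_nonneg (s + 5 / 4 * (n : ℝ) + 1)]
      rw [hrec']
      linarith
end

section
/- Let the sequence (t_k) be defined by t_1 = 1 and t_{k+1} = (1 + sqrt(1 + 4 t_k^2))/2. Then for every k ≥ 1, the sum ∑_{i=1}^{k} t_{i+1} / t_{k+1}^2 is at most 2. -/
theorem nesterov_step_sum_bound (t : ℕ → ℝ)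
    (h1 : t 1 = 1)
    (hrec : ∀ k ≥ 1, t (k + 1) = (1 + Real.sqrt (1 + 4 * t k ^ 2)) / 2) :
    ∀ k ≥ 1, (∑ i ∈ Finset.Icc 1 k, t (i + 1)) / t (k + 1) ^ 2 ≤ 2 := by
  have hsq : ∀ k ≥ 1, t (k + 1) ^ 2 = t (k + 1) + t k ^ 2 := by
    intro k hk
    have h := hrec k hk
    have hs : Real.sqrt (1 + 4 * t k ^ 2) ^ 2 = 1 + 4 * t k ^ 2 :=
      Real.sq_sqrt (by positivity)
    nlinarith [hs, h]
  have hpos : ∀ k ≥ 1, (1:ℝ)/2 ≤ t (k + 1) := by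
    intro k hk
    have h := hrec k hk
    have hnn := Real.sqrt_nonneg (1 + 4 * t k ^ 2)
    linarith
  have hsum : ∀ k ≥ 1, (∑ i ∈ Finset.Icc 1 k, t (i + 1)) = t (k + 1) ^ 2 - 1 := by
    intro k hk
    induction k, hk using Nat.le_induction with
    | base =>
      have h := hsq 1 le_rfl
      rw [h1] at h
      simp
      linarith
    | succ n hn ih =>
      rw [Finset.sum_Icc_succ_top (by omega : 1 ≤ n + 1), ih]
      have h := hsq (n + 1) (by omega)
      linarith
  intro k hk
  have hp := hpos k hk
  have hsqpos : (0:ℝ) < t (k + 1) ^ 2 := by nlinarith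
  rw [div_le_iff₀ hsqpos, hsum k hk]
  linarith
end

section
/- Let U and V be finite-dimensional real inner product spaces, Q₁₂ : V → U a linear map, and Q₂₂ : V → V a self-adjoint positive semidefinite linear operator. Let Q : U × V → U × V be the self-adjoint positive semidefinite operator given in block form by Q(u,v) = (Q₁₁ u + Q₁₂ v, Q₁₂* u + Q₂₂ v) for some self-adjoint positive semidefinite Q₁₁. Then for all ũ, u ∈ U and ṽ, v, v′ ∈ V, we have 2⟨ũ - u, Q₁₂(ṽ - v′)⟩ ≤ ‖(ũ,ṽ) - (u,v)‖²_Q + ‖v′ - v‖²_{Q₂₂} - ‖ṽ - v‖²_{Q₂₂}, where ‖x‖²_A denotes ⟨x, A x⟩. -/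
/-!
With `a = ũ - u`, `b = ṽ - v`, `c = v′ - v`, expanding the block form gives
`‖(a, b)‖²_Q - ‖(a, c)‖²_Q = 2⟨a, Q₁₂ (b - c)⟩ + ‖b‖²_{Q₂₂} - ‖c‖²_{Q₂₂}`,
so the right-hand side minus the left-hand side is `‖(a, c)‖²_Q ≥ 0`.
-/

section BlockOperator

variable {U V : Type*} [NormedAddCommGroup U] [InnerProductSpace ℝ U]
  [NormedAddCommGroup V] [InnerProductSpace ℝ V]
  {Q11 : U →ₗ[ℝ] U} {Q12 : V →ₗ[ℝ] U} {Q12s : U →ₗ[ℝ] V} {Q22 : V →ₗ[ℝ] V}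
  {Q : U × V →ₗ[ℝ] U × V}

theorem inner_block_apply_self
    (hblock : ∀ u v, Q (u, v) = (Q11 u + Q12 v, Q12s u + Q22 v))
    (hadj : ∀ (u : U) (v : V), (inner ℝ (Q12 v) u : ℝ) = inner ℝ v (Q12s u))
    (a : U) (b : V) :
    (inner ℝ a (Q (a, b)).1 : ℝ) + inner ℝ b (Q (a, b)).2
      = inner ℝ a (Q11 a) + 2 * inner ℝ a (Q12 b) + inner ℝ b (Q22 b) := by
  rw [hblock, inner_add_right, inner_add_right, ← hadj, real_inner_comm (Q12 b)]
  ring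

end BlockOperator

theorem block_offdiag_cauchy_schwarz_general
    {U V : Type*} [NormedAddCommGroup U] [InnerProductSpace ℝ U]
    [NormedAddCommGroup V] [InnerProductSpace ℝ V]
    (Q11 : U →ₗ[ℝ] U) (Q12 : V →ₗ[ℝ] U) (Q12s : U →ₗ[ℝ] V) (Q22 : V →ₗ[ℝ] V)
    (Q : U × V →ₗ[ℝ] U × V)
    -- block structure of Q
    (hblock : ∀ u v, Q (u, v) = (Q11 u + Q12 v, Q12s u + Q22 v))
    -- Q12s is the adjoint of Q12
    (hadj : ∀ (u : U) (v : V), (inner ℝ (Q12 v) u : ℝ) = inner ℝ v (Q12s u))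
    -- Q self-adjoint positive semidefinite (w.r.t. the product inner product)
    (hQpsd : ∀ w : U × V, 0 ≤ (inner ℝ w.1 (Q w).1 : ℝ) + (inner ℝ w.2 (Q w).2 : ℝ)) :
    ∀ (u1 u0 : U) (v1 v0 v2 : V),
      2 * (inner ℝ (u1 - u0) (Q12 (v1 - v2)) : ℝ)
        ≤ ((inner ℝ (u1 - u0) (Q (u1 - u0, v1 - v0)).1 : ℝ)
            + (inner ℝ (v1 - v0) (Q (u1 - u0, v1 - v0)).2 : ℝ))
          + (inner ℝ (v2 - v0) (Q22 (v2 - v0)) : ℝ)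
          - (inner ℝ (v1 - v0) (Q22 (v1 - v0)) : ℝ) := by
  intro u1 u0 v1 v0 v2
  have hpsd := hQpsd (u1 - u0, v2 - v0)
  rw [inner_block_apply_self hblock hadj] at hpsd ⊢
  have hdiff : v1 - v2 = (v1 - v0) - (v2 - v0) := by abel
  rw [hdiff, map_sub, inner_sub_right]
  linarith

/-- The Cauchy–Schwarz type inequality (12) for the off-diagonal block of a
self-adjoint positive semidefinite 2×2 block operator `Q` on `U × V`.
The inner product on `U × V` is the componentwise sum. -/
theorem block_offdiag_cauchy_schwarz
    {U V : Type*} [NormedAddCommGroup U] [InnerProductSpace ℝ U]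
    [NormedAddCommGroup V] [InnerProductSpace ℝ V]
    [FiniteDimensional ℝ U] [FiniteDimensional ℝ V]
    (Q11 : U →ₗ[ℝ] U) (Q12 : V →ₗ[ℝ] U) (Q12s : U →ₗ[ℝ] V) (Q22 : V →ₗ[ℝ] V)
    (Q : U × V →ₗ[ℝ] U × V)
    -- block structure of Q
    (hblock : ∀ u v, Q (u, v) = (Q11 u + Q12 v, Q12s u + Q22 v))
    -- Q12s is the adjoint of Q12
    (hadj : ∀ (u : U) (v : V), (inner ℝ (Q12 v) u : ℝ) = inner ℝ v (Q12s u))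
    -- Q11 self-adjoint positive semidefinite
    (hQ11sa : ∀ u u' : U, (inner ℝ (Q11 u) u' : ℝ) = inner ℝ u (Q11 u'))
    (hQ11psd : ∀ u : U, 0 ≤ (inner ℝ u (Q11 u) : ℝ))
    -- Q22 self-adjoint positive semidefinite
    (hQ22sa : ∀ v v' : V, (inner ℝ (Q22 v) v' : ℝ) = inner ℝ v (Q22 v'))
    (hQ22psd : ∀ v : V, 0 ≤ (inner ℝ v (Q22 v) : ℝ))
    -- Q self-adjoint positive semidefinite (w.r.t. the product inner product)
    (hQsa : ∀ w w' : U × V,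
      (inner ℝ (Q w).1 w'.1 : ℝ) + (inner ℝ (Q w).2 w'.2 : ℝ)
        = (inner ℝ w.1 (Q w').1 : ℝ) + (inner ℝ w.2 (Q w').2 : ℝ))
    (hQpsd : ∀ w : U × V, 0 ≤ (inner ℝ w.1 (Q w).1 : ℝ) + (inner ℝ w.2 (Q w).2 : ℝ)) :
    ∀ (u1 u0 : U) (v1 v0 v2 : V),
      2 * (inner ℝ (u1 - u0) (Q12 (v1 - v2)) : ℝ)
        ≤ ((inner ℝ (u1 - u0) (Q (u1 - u0, v1 - v0)).1 : ℝ)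
            + (inner ℝ (v1 - v0) (Q (u1 - u0, v1 - v0)).2 : ℝ))
          + (inner ℝ (v2 - v0) (Q22 (v2 - v0)) : ℝ)
          - (inner ℝ (v1 - v0) (Q22 (v1 - v0)) : ℝ) :=
  block_offdiag_cauchy_schwarz_general Q11 Q12 Q12s Q22 Q hblock hadj hQpsd
end

section
/- Let X be a real m × n matrix. Then the symmetric block matrix [[(X Xᵀ)^{1/2}, -X], [-Xᵀ, (Xᵀ X)^{1/2}]] is positive semidefinite; equivalently, the block matrix [[0, X],[Xᵀ, 0]] is bounded above in the Loewner order by the block-diagonal matrix Diag((X Xᵀ)^{1/2}, (Xᵀ X)^{1/2}). -/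
open Matrix

open scoped ComplexOrder in
/-- The square root of a positive semidefinite matrix, as defined in Mathlib (December 2024),
since removed from Mathlib. -/
noncomputable def Matrix.PosSemidef.sqrt {n : Type*} [Fintype n] [DecidableEq n] {𝕜 : Type*}
    [RCLike 𝕜] {A : Matrix n n 𝕜} (hA : A.PosSemidef) : Matrix n n 𝕜 :=
  hA.1.eigenvectorUnitary.1 * diagonal ((↑) ∘ Real.sqrt ∘ hA.1.eigenvalues) *
  (star hA.1.eigenvectorUnitary : Matrix n n 𝕜)

/-!
The matrix `M = [[0, X], [Xᴴ, 0]]` is self-adjoint with `star M * M = diag(X Xᴴ, Xᴴ X)`, so its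
absolute value `|M| = √(star M * M)` is `diag(√(X Xᴴ), √(Xᴴ X))`. The block matrix in question is
`|M| - M = 2 • M⁻`, which is nonnegative.
-/

namespace CFC

variable {A : Type*} [NonUnitalRing A] [StarRing A] [TopologicalSpace A]
  [Module ℝ A] [SMulCommClass ℝ A A] [IsScalarTower ℝ A A]
  [NonUnitalContinuousFunctionalCalculus ℝ A IsSelfAdjoint]
  [PartialOrder A] [StarOrderedRing A] [NonnegSpectrumClass ℝ A]
  [IsTopologicalRing A] [T2Space A]

lemma le_abs_self (a : A) (ha : IsSelfAdjoint a := by cfc_tac) : a ≤ abs a :=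
  sub_nonneg.1 <| abs_sub_self a ha ▸ smul_nonneg zero_le_two (negPart_nonneg a)

end CFC

namespace Matrix

lemma PosSemidef.fromBlocks_zero₁₂_zero₂₁ {m n R : Type*} [Fintype m] [Fintype n] [Ring R]
    [PartialOrder R] [StarRing R] [IsOrderedAddMonoid R] {A : Matrix m m R} {B : Matrix n n R}
    (hA : A.PosSemidef) (hB : B.PosSemidef) : (fromBlocks A 0 0 B).PosSemidef := by
  refine .of_dotProduct_mulVec_nonneg ?_ fun x => ?_
  · simp [isHermitian_fromBlocks_iff, hA.1, hB.1]
  · rw [fromBlocks_mulVec, dotProduct_block]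
    simp only [Sum.elim_comp_inl, Sum.elim_comp_inr, zero_mulVec, add_zero, zero_add]
    exact add_nonneg (hA.dotProduct_mulVec_nonneg (x ∘ Sum.inl))
      (hB.dotProduct_mulVec_nonneg (x ∘ Sum.inr))

variable {m n 𝕜 : Type*} [Fintype m] [Fintype n] [DecidableEq m] [DecidableEq n] [RCLike 𝕜]

open scoped MatrixOrder ComplexOrder

lemma PosSemidef.sqrt_eq_cfcSqrt {A : Matrix n n 𝕜} (hA : A.PosSemidef) :
    hA.sqrt = CFC.sqrt A := by
  rw [CFC.sqrt_eq_cfc, cfc_nnreal_eq_real _ A, hA.1.cfc_eq]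
  simp only [IsHermitian.cfc, Unitary.conjStarAlgAut_apply, PosSemidef.sqrt]
  congr 3
  ext i
  simp [Real.coe_sqrt, Real.coe_toNNReal', max_eq_left (hA.eigenvalues_nonneg i)]

lemma cfcAbs_fromBlocks_zero₁₁_zero₂₂ (X : Matrix m n 𝕜) :
    CFC.abs (fromBlocks 0 X Xᴴ 0) = fromBlocks (CFC.sqrt (X * Xᴴ)) 0 0 (CFC.sqrt (Xᴴ * X)) := by
  have hD : 0 ≤ fromBlocks (CFC.sqrt (X * Xᴴ)) 0 0 (CFC.sqrt (Xᴴ * X)) :=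
    PosSemidef.nonneg <| .fromBlocks_zero₁₂_zero₂₁ (CFC.sqrt_nonneg _).posSemidef
      (CFC.sqrt_nonneg _).posSemidef
  rw [CFC.abs, CFC.sqrt_eq_iff _ _ (star_mul_self_nonneg _) hD, fromBlocks_multiply,
    CFC.sqrt_mul_sqrt_self _ (posSemidef_self_mul_conjTranspose X).nonneg,
    CFC.sqrt_mul_sqrt_self _ (posSemidef_conjTranspose_mul_self X).nonneg]
  simp [star_eq_conjTranspose, fromBlocks_conjTranspose, fromBlocks_multiply]

lemma posSemidef_fromBlocks_cfcSqrt_neg (X : Matrix m n 𝕜) :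
    (fromBlocks (CFC.sqrt (X * Xᴴ)) (-X) (-Xᴴ) (CFC.sqrt (Xᴴ * X))).PosSemidef := by
  have hM : IsSelfAdjoint (fromBlocks 0 X Xᴴ 0) := by
    simp [IsSelfAdjoint, star_eq_conjTranspose, fromBlocks_conjTranspose]
  have h := sub_nonneg.2 (CFC.le_abs_self _ hM)
  rw [cfcAbs_fromBlocks_zero₁₁_zero₂₂, sub_eq_add_neg, fromBlocks_neg, fromBlocks_add] at h
  simpa using h.posSemidef

end Matrix

/-- For a real m × n matrix X, the block matrix
[[(X Xᵀ)^{1/2}, -X], [-Xᵀ, (Xᵀ X)^{1/2}]] is positive semidefinite. -/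
theorem block_sqrt_dominates {m n : ℕ} (X : Matrix (Fin m) (Fin n) ℝ)
    (hP : (X * Xᵀ).PosSemidef) (hQ : (Xᵀ * X).PosSemidef) :
    (Matrix.fromBlocks hP.sqrt (-X) (-Xᵀ) hQ.sqrt).PosSemidef := by
  rw [hP.sqrt_eq_cfcSqrt, hQ.sqrt_eq_cfcSqrt, ← conjTranspose_eq_transpose_of_trivial]
  exact posSemidef_fromBlocks_cfcSqrt_neg X
end

section
/- Let B₁, ..., B_q be linear maps from a finite-dimensional real inner product space X to ℝ^{m_1}, ..., ℝ^{m_q} respectively, and let B : X → ℝ^{m_1} × ⋯ × ℝ^{m_q} be the stacked operator B x = (B₁ x, ..., B_q x). Define for each i the operator M_i = B_i B_i* + ∑_{j ≠ i} (B_i B_j* B_j B_i*)^{1/2}. Then B B* ⪯ Diag(M₁, ..., M_q) in the Loewner order on self-adjoint operators on ℝ^{m_1} × ⋯ × ℝ^{m_q}. -/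
/-!
Expanding `⟪z, B B* z⟫ = ∑ i j, ⟪z i, B i (B j)* (z j)⟫`, it suffices to bound each off-diagonal
term: for `T = B i (B j)*`, `S = (T T*)^{1/2}` and `S' = (T* T)^{1/2}` one has
`2 ⟪a, T b⟫ ≤ ⟪a, S a⟫ + ⟪b, S' b⟫`. Diagonalise `S'`: if `S' v = μ v` with `μ > 0`, then `T v / μ`
is a unit eigenvector of `S` for the same eigenvalue, and these vectors are orthonormal. In these
two orthonormal systems `⟪a, T b⟫ = ∑ μ α β ≤ ∑ μ (α² + β²) / 2`, and a Bessel inequality for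
positive operators bounds each half by the corresponding quadratic form.
-/

open Finset
open scoped RealInnerProductSpace

namespace LinearMap

variable {E F : Type*} [NormedAddCommGroup E] [InnerProductSpace ℝ E]
  [NormedAddCommGroup F] [InnerProductSpace ℝ F]

theorem IsPositive.apply_eq_smul_of_apply_apply_eq {S : E →ₗ[ℝ] E} (hS : S.IsPositive)
    {μ : ℝ} (hμ : 0 < μ) {v : E} (h : S (S v) = (μ * μ) • v) : S v = μ • v := by
  set d := S v - μ • v
  have hSd : S d = (-μ) • d := by
    simp only [d, map_sub, map_smul, h, smul_sub, smul_smul]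
    module
  have hd : ⟪d, d⟫ ≤ 0 := by
    have := hS.inner_nonneg_right d
    rw [hSd, real_inner_smul_right] at this
    nlinarith [real_inner_self_nonneg (x := d)]
  exact sub_eq_zero.mp (real_inner_self_nonpos.mp hd)

theorem IsPositive.sum_mul_inner_sq_le {κ : Type*} [Fintype κ] {S : E →ₗ[ℝ] E}
    (hS : S.IsPositive) {w : κ → E} (hw : Orthonormal ℝ w) {μ : κ → ℝ}
    (hSw : ∀ l, S (w l) = μ l • w l) (a : E) :
    ∑ l, μ l * ⟪w l, a⟫ ^ 2 ≤ ⟪a, S a⟫ := by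
  set c := ∑ l, ⟪w l, a⟫ • w l
  have hSc : S c = ∑ l, (⟪w l, a⟫ * μ l) • w l := by
    simp only [c, map_sum, map_smul, hSw, smul_smul]
  have haSc : ⟪a, S c⟫ = ∑ l, μ l * ⟪w l, a⟫ ^ 2 := by
    simp only [hSc, inner_sum, real_inner_smul_right, real_inner_comm a]
    exact sum_congr rfl fun l _ => by ring
  have hcSc : ⟪c, S c⟫ = ∑ l, μ l * ⟪w l, a⟫ ^ 2 := by
    rw [hSc, hw.inner_sum]
    exact sum_congr rfl fun l _ => by simp only [conj_trivial]; ring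
  have hcSa : ⟪c, S a⟫ = ⟪a, S c⟫ := by
    rw [← hS.isSymmetric, real_inner_comm]
  have := hS.inner_nonneg_right (a - c)
  simp only [map_sub, inner_sub_left, inner_sub_right, hcSa, haSc, hcSc] at this
  linarith

variable [FiniteDimensional ℝ E] [FiniteDimensional ℝ F]

theorem two_mul_inner_apply_le_of_isPositive_sq (T : F →ₗ[ℝ] E) {S : E →ₗ[ℝ] E}
    {S' : F →ₗ[ℝ] F} (hS : S.IsPositive) (hS' : S'.IsPositive)
    (hSsq : S ∘ₗ S = T ∘ₗ T.adjoint) (hS'sq : S' ∘ₗ S' = T.adjoint ∘ₗ T) (a : E) (b : F) :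
    2 * ⟪a, T b⟫ ≤ ⟪a, S a⟫ + ⟪b, S' b⟫ := by
  classical
  set V := hS'.isSymmetric.eigenvectorBasis rfl
  set μ := hS'.isSymmetric.eigenvalues rfl
  have hS'V (l) : S' (V l) = μ l • V l := hS'.isSymmetric.apply_eigenvectorBasis rfl l
  have hμ (l) : 0 ≤ μ l := hS'.nonneg_eigenvalues rfl l
  have hTV (l m) : ⟪T (V l), T (V m)⟫ = μ m ^ 2 * ⟪V l, V m⟫ := by
    rw [← adjoint_inner_right, ← comp_apply, ← hS'sq, comp_apply, hS'V, map_smul, hS'V,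
      smul_smul, real_inner_smul_right, sq]
  have hTV_zero (l) (hl : μ l = 0) : T (V l) = 0 := by
    rw [← inner_self_eq_zero (𝕜 := ℝ), hTV, hl]
    ring
  -- `T / μ` carries the eigenvectors of `S'` with `μ ≠ 0` to orthonormal eigenvectors of `S`.
  let κ := {l // μ l ≠ 0}
  let w : κ → E := fun l => (μ l)⁻¹ • T (V l)
  have hTw (l : κ) : T (V l) = μ l • w l := by
    simp only [w, smul_smul, mul_inv_cancel₀ l.2, one_smul]
  have hw : Orthonormal ℝ w := by
    rw [orthonormal_iff_ite]
    intro l m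
    simp only [w, real_inner_smul_left, real_inner_smul_right, hTV,
      orthonormal_iff_ite.mp V.orthonormal, Subtype.val_inj]
    split_ifs with h
    · subst h
      field_simp [l.2]
    · simp
  have hSw (l : κ) : S (w l) = μ l • w l := by
    have hSST : S (S (T (V l))) = (μ l * μ l) • T (V l) := by
      rw [← comp_apply S S, hSsq, comp_apply, ← comp_apply T.adjoint T, ← hS'sq, comp_apply,
        hS'V, map_smul, hS'V, smul_smul, map_smul]
    have hST := hS.apply_eq_smul_of_apply_apply_eq ((hμ l).lt_of_ne' l.2) hSST
    simp only [w, map_smul, hST, smul_comm (μ l)]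
  have hTb : ⟪a, T b⟫ = ∑ l : κ, μ l * ⟪w l, a⟫ * ⟪V l, b⟫ := by
    conv_lhs => rw [← V.sum_repr' b]
    rw [map_sum, inner_sum, ← sum_filter_of_ne (p := fun l => μ l ≠ 0)
      (fun l _ h hl => h (by rw [map_smul, hTV_zero l hl, smul_zero, inner_zero_right])),
      sum_subtype (p := fun l => μ l ≠ 0) _ (fun l => by simp)]
    refine sum_congr rfl fun l _ => ?_
    rw [map_smul, hTw, real_inner_smul_right, real_inner_smul_right, real_inner_comm a (w l)]
    ring
  have hV : Orthonormal ℝ (fun l : κ => V l) := V.orthonormal.comp _ Subtype.val_injective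
  calc 2 * ⟪a, T b⟫ = ∑ l : κ, 2 * (μ l * ⟪w l, a⟫ * ⟪V l, b⟫) := by rw [hTb, mul_sum]
    _ ≤ ∑ l : κ, (μ l * ⟪w l, a⟫ ^ 2 + μ l * ⟪V l, b⟫ ^ 2) :=
      sum_le_sum fun l _ => by nlinarith [hμ l, sq_nonneg (⟪w l, a⟫ - ⟪V l, b⟫)]
    _ ≤ ⟪a, S a⟫ + ⟪b, S' b⟫ := by
      rw [sum_add_distrib]
      exact add_le_add (hS.sum_mul_inner_sq_le hw hSw a)
        (hS'.sum_mul_inner_sq_le hV (fun l => hS'V l) b)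

end LinearMap

theorem adjoint_apply_eq_sum_of_apply_eq {ι : Type*} [Fintype ι]
    {X : Type*} [NormedAddCommGroup X] [InnerProductSpace ℝ X] [FiniteDimensional ℝ X]
    {E : ι → Type*} [∀ i, NormedAddCommGroup (E i)] [∀ i, InnerProductSpace ℝ (E i)]
    [∀ i, FiniteDimensional ℝ (E i)] (B : ∀ i, X →ₗ[ℝ] E i) (Bfull : X →ₗ[ℝ] PiLp 2 E)
    (hBfull : ∀ x i, Bfull x i = B i x) (z : PiLp 2 E) :
    Bfull.adjoint z = ∑ i, (B i).adjoint (z i) := by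
  refine ext_inner_right ℝ fun x => ?_
  simp only [LinearMap.adjoint_inner_left, PiLp.inner_apply, hBfull, sum_inner]

theorem sum_sum_le_of_two_mul_le_add {ι : Type*} [Fintype ι] [DecidableEq ι]
    (G D : ι → ι → ℝ) (h : ∀ i j, i ≠ j → 2 * G i j ≤ D i j + D j i) :
    ∑ i, ∑ j, G i j ≤ ∑ i, (G i i + ∑ j ∈ univ.erase i, D i j) := by
  have hdiag : ∑ i, ∑ j, G i j = ∑ i, G i i + ∑ i, ∑ j ∈ univ.erase i, G i j := by
    rw [← sum_add_distrib]
    exact sum_congr rfl fun i _ => (add_sum_erase _ _ (mem_univ i)).symm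
  have hswap : ∑ i, ∑ j ∈ univ.erase i, D j i = ∑ i, ∑ j ∈ univ.erase i, D i j :=
    sum_comm' fun _ _ => by simp [and_comm, eq_comm]
  have hoff : 2 * ∑ i, ∑ j ∈ univ.erase i, G i j
      ≤ ∑ i, ∑ j ∈ univ.erase i, D i j + ∑ i, ∑ j ∈ univ.erase i, D j i := by
    simp only [mul_sum, ← sum_add_distrib]
    exact sum_le_sum fun i _ => sum_le_sum fun j hj => h i j (ne_of_mem_erase hj).symm
  rw [sum_add_distrib]
  linarith

/-- `B B* ⪯ Diag(M₁, ..., M_q)` where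
`M_i = B_i B_i* + ∑_{j ≠ i} (B_i B_j* B_j B_i*)^{1/2}`. -/
theorem stacked_operator_diag_domination
    {ι : Type*} [Fintype ι] [DecidableEq ι]
    {X : Type*} [NormedAddCommGroup X] [InnerProductSpace ℝ X] [FiniteDimensional ℝ X]
    {E : ι → Type*} [∀ i, NormedAddCommGroup (E i)] [∀ i, InnerProductSpace ℝ (E i)]
    [∀ i, FiniteDimensional ℝ (E i)]
    (B : ∀ i, X →ₗ[ℝ] E i)
    -- the stacked operator
    (Bfull : X →ₗ[ℝ] PiLp 2 E)
    (hBfull : ∀ (x : X) (i : ι), Bfull x i = B i x)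
    -- S i j is the positive semidefinite square root of B_i B_j* B_j B_i*
    (S : ∀ i j, E i →ₗ[ℝ] E i)
    (hSsa : ∀ i j, ∀ a b : E i, (inner ℝ (S i j a) b : ℝ) = inner ℝ a (S i j b))
    (hSpsd : ∀ i j, ∀ a : E i, 0 ≤ (inner ℝ a (S i j a) : ℝ))
    (hSsq : ∀ i j, (S i j) ∘ₗ (S i j)
      = ((B i) ∘ₗ (LinearMap.adjoint (B j))) ∘ₗ ((B j) ∘ₗ (LinearMap.adjoint (B i))))
    -- the diagonal blocks M i
    (M : ∀ i, E i →ₗ[ℝ] E i)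
    (hM : ∀ i, M i = (B i) ∘ₗ (LinearMap.adjoint (B i))
      + ∑ j ∈ Finset.univ.erase i, S i j) :
    ∀ z : PiLp 2 E,
      (inner ℝ z (Bfull (LinearMap.adjoint Bfull z)) : ℝ)
        ≤ ∑ i, (inner ℝ (z i) (M i (z i)) : ℝ) := by
  intro z
  have hS (i j) : (S i j).IsPositive :=
    (LinearMap.isPositive_iff _).mpr ⟨hSsa i j, fun a => hSsa i j a a ▸ hSpsd i j a⟩
  have hpair (i j) : 2 * ⟪z i, B i ((B j).adjoint (z j))⟫
      ≤ ⟪z i, S i j (z i)⟫ + ⟪z j, S j i (z j)⟫ := by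
    have hadj : ((B i) ∘ₗ (B j).adjoint).adjoint = (B j) ∘ₗ (B i).adjoint := by
      rw [LinearMap.adjoint_comp, LinearMap.adjoint_adjoint]
    exact LinearMap.two_mul_inner_apply_le_of_isPositive_sq _ (hS i j) (hS j i)
      (by rw [hadj, hSsq]) (by rw [hadj, hSsq]) (z i) (z j)
  calc ⟪z, Bfull (Bfull.adjoint z)⟫ = ∑ i, ∑ j, ⟪z i, B i ((B j).adjoint (z j))⟫ := by
        rw [adjoint_apply_eq_sum_of_apply_eq B Bfull hBfull, PiLp.inner_apply]
        exact sum_congr rfl fun i _ => by rw [hBfull, map_sum, inner_sum]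
    _ ≤ ∑ i, (⟪z i, B i ((B i).adjoint (z i))⟫ + ∑ j ∈ univ.erase i, ⟪z i, S i j (z i)⟫) :=
        sum_sum_le_of_two_mul_le_add _ _ fun i j _ => hpair i j
    _ = ∑ i, ⟪z i, M i (z i)⟫ := by
        simp only [hM, LinearMap.add_apply, LinearMap.comp_apply, LinearMap.sum_apply,
          inner_add_right, inner_sum]
end

section
/- Let W be a finite-dimensional real inner product space, F : W → W Lipschitz continuous and differentiable at a point x with ‖F(x)‖ ≠ 0, and let η < 1 and d ∈ W satisfy ‖F′(x) d + F(x)‖ ≤ η ‖F(x)‖. Then d is a descent direction for the function x ↦ ‖F(x)‖ at x: there exists t̄ > 0 such that ‖F(x + t d)‖ < ‖F(x)‖ for all t ∈ (0, t̄). -/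
/-!
Along the line `t ↦ x + t • d`, the derivative of `t ↦ ‖F (x + t • d)‖ ^ 2` at `t = 0` is
`2 ⟪F x, F' d⟫`, and the residual condition with Cauchy–Schwarz gives
`⟪F x, F' d⟫ ≤ (η - 1) ‖F x‖ ^ 2 < 0`. A function with negative derivative at a point
lies strictly below its value there just to the right of it.
-/

open Filter Set Topology
open scoped RealInnerProductSpace

theorem real_inner_le_of_norm_add_le {E : Type*} [NormedAddCommGroup E] [InnerProductSpace ℝ E]
    {u v : E} {η : ℝ} (h : ‖v + u‖ ≤ η * ‖u‖) : ⟪u, v⟫ ≤ (η - 1) * ‖u‖ ^ 2 :=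
  calc ⟪u, v⟫ = ⟪u, v + u⟫ - ‖u‖ ^ 2 := by
        rw [inner_add_right, real_inner_self_eq_norm_sq]; ring
    _ ≤ ‖u‖ * (η * ‖u‖) - ‖u‖ ^ 2 := by
        gcongr
        exact (real_inner_le_norm _ _).trans (mul_le_mul_of_nonneg_left h (norm_nonneg u))
    _ = (η - 1) * ‖u‖ ^ 2 := by ring

theorem HasDerivAt.eventually_nhdsGT_lt {f : ℝ → ℝ} {f' a : ℝ} (hf : HasDerivAt f f' a)
    (hf' : f' < 0) : ∀ᶠ t in 𝓝[>] a, f t < f a := by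
  have hslope : Tendsto (slope f a) (𝓝[>] a) (𝓝 f') :=
    (hasDerivWithinAt_iff_tendsto_slope' self_notMem_Ioi).1 hf.hasDerivWithinAt
  filter_upwards [hslope.eventually (gt_mem_nhds hf'), self_mem_nhdsWithin]
    with t hneg (ht : a < t)
  rw [slope_def_field, div_neg_iff] at hneg
  rcases hneg with ⟨_, hden⟩ | ⟨hnum, _⟩ <;> linarith

theorem HasLineDerivAt.eventually_norm_lt_of_inner_neg {E W : Type*} [NormedAddCommGroup E]
    [NormedSpace ℝ E] [NormedAddCommGroup W] [InnerProductSpace ℝ W] {F : E → W} {x d : E}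
    {v : W} (hF : HasLineDerivAt ℝ F v x d) (hv : ⟪F x, v⟫ < 0) :
    ∀ᶠ t in 𝓝[>] (0 : ℝ), ‖F (x + t • d)‖ < ‖F x‖ := by
  have hsq : HasDerivAt (fun t : ℝ ↦ ‖F (x + t • d)‖ ^ 2) (2 * ⟪F x, v⟫) 0 := by
    simpa using hF.norm_sq
  filter_upwards [hsq.eventually_nhdsGT_lt (by linarith)] with t ht
  simp only [zero_smul, add_zero] at ht
  exact lt_of_pow_lt_pow_left₀ 2 (norm_nonneg _) ht

theorem inexact_newton_descent_direction_general
    {W : Type*} [NormedAddCommGroup W] [InnerProductSpace ℝ W]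
    (F : W → W)
    (x : W) (F' : W →L[ℝ] W) (hF' : HasFDerivAt F F' x)
    (hFx : F x ≠ 0)
    (η : ℝ) (hη : η < 1) (d : W) (hd : ‖F' d + F x‖ ≤ η * ‖F x‖) :
    ∃ tbar > (0 : ℝ), ∀ t ∈ Set.Ioo (0 : ℝ) tbar, ‖F (x + t • d)‖ < ‖F x‖ := by
  have hdescent : ⟪F x, F' d⟫ < 0 :=
    (real_inner_le_of_norm_add_le hd).trans_lt
      (mul_neg_of_neg_of_pos (by linarith) (pow_pos (norm_pos_iff.2 hFx) 2))
  exact mem_nhdsGT_iff_exists_Ioo_subset.1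
    ((hF'.hasLineDerivAt d).eventually_norm_lt_of_inner_neg hdescent)

/-- An inexact Newton direction with residual factor `η < 1` is a descent
direction of `x ↦ ‖F(x)‖`. -/
theorem inexact_newton_descent_direction
    {W : Type*} [NormedAddCommGroup W] [InnerProductSpace ℝ W] [FiniteDimensional ℝ W]
    (F : W → W) (c : NNReal) (hFlip : LipschitzWith c F)
    (x : W) (F' : W →L[ℝ] W) (hF' : HasFDerivAt F F' x)
    (hFx : F x ≠ 0)
    (η : ℝ) (hη : η < 1) (d : W) (hd : ‖F' d + F x‖ ≤ η * ‖F x‖) :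
    ∃ tbar > (0 : ℝ), ∀ t ∈ Set.Ioo (0 : ℝ) tbar, ‖F (x + t • d)‖ < ‖F x‖ :=
  inexact_newton_descent_direction_general F x F' hF' hFx η hη d hd
end

section
/- Let (a_k)_{k ≥ 1} be a nonnegative sequence, (λ_k)_{k ≥ 1} a nonnegative sequence, and C ≥ 0, and suppose that for every k ≥ 1: λ_k² ≤ C + 2 ∑_{i=1}^{k-1} a_i λ_i + ∑_{i=1}^{k-1} a_i², where ∑_{i=1}^{∞} a_i < ∞. Then the sequence (λ_k) is bounded; in fact λ_k ≤ max{1, C + 2∑_{i=1}^{∞} a_i + ∑_{i=1}^{∞} a_i²} for all k. -/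
/-!
Let `j ≤ k` be an index where `lam` is maximal among `lam 0, …, lam k`. Bounding every `lam i`
with `i < j` by `lam j` in the recursive inequality at `j` gives
`lam j ^ 2 ≤ (C + ∑ a i ^ 2) + 2 (∑ a i) lam j`, a quadratic inequality which forces
`lam j ≤ 1` or, after dividing by `lam j ≥ 1`, `lam j ≤ C + 2 ∑ a i + ∑ a i ^ 2`.
-/

open Finset

/-- Each term is at most the total sum, so `f i ^ 2 ≤ (∑' j, f j) * f i`. -/
theorem Summable.sq_of_nonneg {ι : Type*} {f : ι → ℝ} (hf : Summable f) (h0 : ∀ i, 0 ≤ f i) :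
    Summable fun i => f i ^ 2 :=
  (hf.mul_left (∑' j, f j)).of_nonneg_of_le (fun i => sq_nonneg _) fun i => by
    rw [sq]
    exact mul_le_mul_of_nonneg_right (hf.le_tsum i fun j _ => h0 j) (h0 i)

theorem le_max_one_of_sq_le_add_mul {x A B : ℝ} (hA : 0 ≤ A) (h : x ^ 2 ≤ A + B * x) :
    x ≤ max 1 (A + B) := by
  rcases le_or_gt x 1 with hx | hx
  · exact le_max_of_le_left hx
  · refine le_max_of_le_right (le_of_mul_le_mul_right ?_ (zero_lt_one.trans hx))
    nlinarith

theorem sum_mul_le_tsum_mul_of_le {a lam : ℕ → ℝ} {j : ℕ} (ha : ∀ i, 0 ≤ a i) (hsum : Summable a)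
    (hlam : 0 ≤ lam j) (hle : ∀ i < j, lam i ≤ lam j) :
    ∑ i ∈ range j, a i * lam i ≤ (∑' i, a i) * lam j :=
  calc ∑ i ∈ range j, a i * lam i
      ≤ ∑ i ∈ range j, a i * lam j :=
        sum_le_sum fun i hi => mul_le_mul_of_nonneg_left (hle i (mem_range.mp hi)) (ha i)
    _ = (∑ i ∈ range j, a i) * lam j := (sum_mul ..).symm
    _ ≤ (∑' i, a i) * lam j :=
        mul_le_mul_of_nonneg_right (hsum.sum_le_tsum _ fun i _ => ha i) hlam

/-- Boundedness of a sequence satisfying a recursive quadratic bound with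
summable coefficients. -/
theorem recursive_quadratic_bounded
    (a lam : ℕ → ℝ) (C : ℝ) (hC : 0 ≤ C)
    (ha : ∀ i, 0 ≤ a i) (hlam : ∀ i, 0 ≤ lam i)
    (hsum : Summable a)
    (hrec : ∀ k, lam k ^ 2
      ≤ C + 2 * ∑ i ∈ Finset.range k, a i * lam i + ∑ i ∈ Finset.range k, a i ^ 2) :
    ∀ k, lam k ≤ max 1 (C + 2 * ∑' i, a i + ∑' i, a i ^ 2) := by
  intro k
  obtain ⟨j, hj, hmax⟩ := exists_max_image (range (k + 1)) lam nonempty_range_add_one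
  have hle : ∀ i < j, lam i ≤ lam j := fun i hi =>
    hmax i (mem_range.mpr (hi.trans (mem_range.mp hj)))
  have hsq_le : ∑ i ∈ range j, a i ^ 2 ≤ ∑' i, a i ^ 2 :=
    (hsum.sq_of_nonneg ha).sum_le_tsum _ fun i _ => sq_nonneg _
  have hquad : lam j ^ 2 ≤ (C + ∑' i, a i ^ 2) + (2 * ∑' i, a i) * lam j := by
    linarith [hrec j, sum_mul_le_tsum_mul_of_le ha hsum (hlam j) hle]
  have hA : 0 ≤ C + ∑' i, a i ^ 2 := add_nonneg hC (tsum_nonneg fun i => sq_nonneg _)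
  calc lam k ≤ lam j := hmax k (self_mem_range_succ k)
    _ ≤ max 1 (C + ∑' i, a i ^ 2 + 2 * ∑' i, a i) := le_max_one_of_sq_le_add_mul hA hquad
    _ = max 1 (C + 2 * ∑' i, a i + ∑' i, a i ^ 2) := by ring_nf
end

section
/- Let p : U → ℝ ∪ {+∞} be proper closed convex on a finite-dimensional real inner product space U, let Q̂₁₁ be a self-adjoint positive definite operator on U, let φ be affine-plus-quadratic of the form φ(u) = ⟨g, u⟩ + (1/2)‖u - u₀‖²_{Q̂₁₁} for fixed g, u₀ ∈ U, and let δ ∈ U. If ũ minimizes p(u) + φ(u) + ⟨δ, u⟩ and ū minimizes p(u) + φ(u), then ‖Q̂₁₁^{1/2}(ũ - ū)‖ ≤ ‖Q̂₁₁^{-1/2} δ‖. -/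
/-!
Testing the minimality of `x` against the points `x + t • (y - x)`, `t ∈ (0, 1]`, and using the
convexity of `p` along that segment gives the variational inequality
`p x - p y ≤ ⟪∇φ x, y - x⟫`, i.e. `-∇φ x ∈ ∂p x`, for both minimizers (for `ũ` with `g + δ` in
place of `g`). Adding the two inequalities (monotonicity of `∂p`) leaves
`‖R (ũ - ū)‖² ≤ -⟪δ, ũ - ū⟫ = -⟪R⁻¹ δ, R (ũ - ū)⟫`, and Cauchy–Schwarz concludes.
Since `⟪u, Q u⟫ = ‖R u‖²`, the quadratic part of `φ` is handled entirely through `R`.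
-/

open Set Filter Topology

open scoped RealInnerProductSpace

theorem nonpos_of_forall_le_mul {a c : ℝ} (h : ∀ t ∈ Ioc (0 : ℝ) 1, a ≤ t * c) : a ≤ 0 := by
  have hlim : Tendsto (fun t : ℝ => t * c) (𝓝[>] 0) (𝓝 0) := by
    simpa using ((continuous_mul_const c).tendsto 0).mono_left nhdsWithin_le_nhds
  exact ge_of_tendsto hlim (eventually_of_mem (Ioc_mem_nhdsGT zero_lt_one) h)

theorem ConvexOn.sub_le_of_forall_le_add {E : Type*} [AddCommGroup E] [Module ℝ E]
    {p h : E → ℝ} (hp : ConvexOn ℝ univ p) {x y : E} (hmin : ∀ z, p x + h x ≤ p z + h z)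
    {a c : ℝ} (hh : ∀ t : ℝ, h (x + t • (y - x)) = h x + t * a + t ^ 2 * c) :
    p x - p y ≤ a := by
  suffices ∀ t ∈ Ioc (0 : ℝ) 1, p x - p y - a ≤ t * c by
    linarith [nonpos_of_forall_le_mul this]
  rintro t ⟨ht0, ht1⟩
  have hconv : p (x + t • (y - x)) ≤ (1 - t) * p x + t * p y := by
    have := hp.2 (mem_univ x) (mem_univ y) (sub_nonneg.2 ht1) ht0.le (sub_add_cancel 1 t)
    rwa [show (1 - t) • x + t • y = x + t • (y - x) by module, smul_eq_mul, smul_eq_mul] at this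
  have hseg := hmin (x + t • (y - x))
  rw [hh] at hseg
  have : t * (p x - p y - a) ≤ t * (t * c) := by linarith
  exact le_of_mul_le_mul_left this ht0

section Quadratic

variable {U V : Type*} [NormedAddCommGroup U] [InnerProductSpace ℝ U]
  [NormedAddCommGroup V] [InnerProductSpace ℝ V]

theorem inner_add_half_norm_sq_add_smul (R : U →ₗ[ℝ] V) (g u₀ x v : U) (t : ℝ) :
    ⟪g, x + t • v⟫ + 1 / 2 * ‖R (x + t • v - u₀)‖ ^ 2 =
      (⟪g, x⟫ + 1 / 2 * ‖R (x - u₀)‖ ^ 2) + t * (⟪g, v⟫ + ⟪R (x - u₀), R v⟫)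
        + t ^ 2 * (1 / 2 * ‖R v‖ ^ 2) := by
  rw [show x + t • v - u₀ = (x - u₀) + t • v by abel, map_add, map_smul, norm_add_sq_real,
    norm_smul, inner_add_right, inner_smul_right, real_inner_smul_right, Real.norm_eq_abs,
    mul_pow, sq_abs]
  ring

theorem ConvexOn.sub_le_of_forall_le_add_quadratic {p : U → ℝ} (hp : ConvexOn ℝ univ p)
    (R : U →ₗ[ℝ] V) {g u₀ x : U}
    (hmin : ∀ z, p x + (⟪g, x⟫ + 1 / 2 * ‖R (x - u₀)‖ ^ 2) ≤
      p z + (⟪g, z⟫ + 1 / 2 * ‖R (z - u₀)‖ ^ 2)) (y : U) :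
    p x - p y ≤ ⟪g, y - x⟫ + ⟪R (x - u₀), R (y - x)⟫ :=
  hp.sub_le_of_forall_le_add (h := fun z => ⟪g, z⟫ + 1 / 2 * ‖R (z - u₀)‖ ^ 2) hmin
    (inner_add_half_norm_sq_add_smul R g u₀ x (y - x))

end Quadratic

theorem norm_le_of_sq_le_inner {V : Type*} [NormedAddCommGroup V] [InnerProductSpace ℝ V]
    {x y : V} (h : ‖x‖ ^ 2 ≤ ⟪y, x⟫) : ‖x‖ ≤ ‖y‖ := by
  nlinarith [norm_nonneg x, norm_nonneg y, real_inner_le_norm y x]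

theorem inexact_minimizer_perturbation_general
    {U : Type*} [NormedAddCommGroup U] [InnerProductSpace ℝ U]
    (p : U → ℝ) (hpconv : ConvexOn ℝ Set.univ p)
    (Q : U →ₗ[ℝ] U)
    -- R is the positive semidefinite square root of Q, Rinv its inverse
    (R Rinv : U →ₗ[ℝ] U)
    (hRsa : ∀ x y : U, (inner ℝ (R x) y : ℝ) = inner ℝ x (R y))
    (hRsq : ∀ x : U, R (R x) = Q x)
    (hRinv : ∀ x : U, R (Rinv x) = x ∧ Rinv (R x) = x)
    (g u₀ δ : U)
    (φ : U → ℝ)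
    (hφ : ∀ u, φ u = (inner ℝ g u : ℝ) + 1 / 2 * (inner ℝ (u - u₀) (Q (u - u₀)) : ℝ))
    (ut ub : U)
    (hut : ∀ u : U, p ut + φ ut + (inner ℝ δ ut : ℝ) ≤ p u + φ u + (inner ℝ δ u : ℝ))
    (hub : ∀ u : U, p ub + φ ub ≤ p u + φ u) :
    ‖R (ut - ub)‖ ≤ ‖Rinv δ‖ := by
  have hφR (u : U) : φ u = ⟪g, u⟫ + 1 / 2 * ‖R (u - u₀)‖ ^ 2 := by
    rw [hφ, ← hRsq, ← hRsa, real_inner_self_eq_norm_sq]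
  have hvi_t := hpconv.sub_le_of_forall_le_add_quadratic R (g := g + δ) (x := ut)
    (fun z => by simpa only [hφR, inner_add_left, add_assoc, add_comm ⟪δ, _⟫] using hut z) ub
  have hvi_b := hpconv.sub_le_of_forall_le_add_quadratic R (x := ub)
    (fun z => by simpa only [hφR, add_assoc] using hub z) ut
  have hmono : ‖R (ut - ub)‖ ^ 2 ≤ ⟪-Rinv δ, R (ut - ub)⟫ := by
    have hR : R (ut - u₀) = R (ub - u₀) + R (ut - ub) := by rw [← map_add]; abel_nf
    rw [inner_neg_left, ← hRsa, (hRinv δ).1]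
    rw [show ub - ut = -(ut - ub) by abel, hR, map_neg, inner_neg_right, inner_neg_right,
      inner_add_left, inner_add_left, real_inner_self_eq_norm_sq] at hvi_t
    linarith
  simpa using norm_le_of_sq_le_inner hmono

/-- Perturbation bound for minimizers of a convex function plus a positive
definite quadratic: `‖Q̂₁₁^{1/2}(ũ - ū)‖ ≤ ‖Q̂₁₁^{-1/2} δ‖`, where `R = Q̂₁₁^{1/2}`
and `Rinv = Q̂₁₁^{-1/2}`. -/
theorem inexact_minimizer_perturbation
    {U : Type*} [NormedAddCommGroup U] [InnerProductSpace ℝ U] [FiniteDimensional ℝ U]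
    (p : U → ℝ) (hpconv : ConvexOn ℝ Set.univ p) (hplsc : LowerSemicontinuous p)
    (Q : U →ₗ[ℝ] U)
    (hQsa : ∀ x y : U, (inner ℝ (Q x) y : ℝ) = inner ℝ x (Q y))
    (hQpd : ∀ x : U, x ≠ 0 → 0 < (inner ℝ x (Q x) : ℝ))
    -- R is the positive semidefinite square root of Q, Rinv its inverse
    (R Rinv : U →ₗ[ℝ] U)
    (hRsa : ∀ x y : U, (inner ℝ (R x) y : ℝ) = inner ℝ x (R y))
    (hRpsd : ∀ x : U, 0 ≤ (inner ℝ x (R x) : ℝ))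
    (hRsq : ∀ x : U, R (R x) = Q x)
    (hRinv : ∀ x : U, R (Rinv x) = x ∧ Rinv (R x) = x)
    (g u₀ δ : U)
    (φ : U → ℝ)
    (hφ : ∀ u, φ u = (inner ℝ g u : ℝ) + 1 / 2 * (inner ℝ (u - u₀) (Q (u - u₀)) : ℝ))
    (ut ub : U)
    (hut : ∀ u : U, p ut + φ ut + (inner ℝ δ ut : ℝ) ≤ p u + φ u + (inner ℝ δ u : ℝ))
    (hub : ∀ u : U, p ub + φ ub ≤ p u + φ u) :
    ‖R (ut - ub)‖ ≤ ‖Rinv δ‖ :=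
  inexact_minimizer_perturbation_general p hpconv Q R Rinv hRsa hRsq hRinv g u₀ δ φ hφ ut ub hut hub
end

section
/- Let W be a finite-dimensional real inner product space and θ : W → ℝ ∪ {+∞} proper convex with minimizer w*. Let (t_k) satisfy t_1 = 1, t_{k+1} = (1 + sqrt(1 + 4 t_k²))/2, and let H ⪰ 0 be self-adjoint. Suppose sequences (w̃^k), (w^k) satisfy the descent inequality θ(w̃^k) - θ(w) ≤ (1/2)‖w - w^k‖²_H - (1/2)‖w - w̃^k‖²_H for all w and k ≥ 1, where w^1 = w̃^0 and w^{k} = w̃^{k-1} + ((t_{k-1}-1)/t_k)(w̃^{k-1} - w̃^{k-2}) for k ≥ 2. Then for all k ≥ 1, θ(w̃^k) - θ(w*) ≤ 2‖w̃^0 - w*‖²_H / (k+1)². -/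
/-!
Put `U k = t k • w̃^k - (t k - 1) • w̃^{k-1} - w*` and `q v = ⟪v, H v⟫`. Testing the descent
inequality at `z = (1 - 1/t_k) w̃^{k-1} + (1/t_k) w*` makes both quadratic terms multiples of
`q (U ·)`, because the extrapolation rule gives `t_k w^k - (t_k - 1) w̃^{k-1} - w* = U (k-1)`.
Together with convexity and `t_k² - t_k = t_{k-1}²`, the Lyapunov quantity
`t_k² (θ(w̃^k) - θ(w*)) + q(U k)/2` does not increase, so it stays below `q(w̃^0 - w*)/2`;
then `t_k ≥ (k+1)/2` gives the rate.
-/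

open Real

lemma nesterov_sq_sub_self (s : ℝ) :
    ((1 + √(1 + 4 * s ^ 2)) / 2) ^ 2 - (1 + √(1 + 4 * s ^ 2)) / 2 = s ^ 2 := by
  linear_combination Real.sq_sqrt (by positivity : (0 : ℝ) ≤ 1 + 4 * s ^ 2) / 4

lemma add_half_le_nesterov (s : ℝ) :
    s + 1 / 2 ≤ (1 + √(1 + 4 * s ^ 2)) / 2 := by
  have : 2 * s ≤ √(1 + 4 * s ^ 2) :=
    Real.le_sqrt_of_sq_le (by nlinarith)
  linarith

lemma nesterov_ge_half_succ {t : ℕ → ℝ} (ht1 : t 1 = 1)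
    (htrec : ∀ k ≥ 1, t (k + 1) = (1 + √(1 + 4 * t k ^ 2)) / 2) :
    ∀ k : ℕ, 1 ≤ k → ((k : ℝ) + 1) / 2 ≤ t k := by
  intro k hk
  induction k, hk using Nat.le_induction with
  | base => norm_num [ht1]
  | succ n hn ih =>
    rw [htrec n hn]
    push_cast
    linarith [add_half_le_nesterov (t n)]

section Lyapunov

variable {W : Type*} [NormedAddCommGroup W] [InnerProductSpace ℝ W] (H : W →ₗ[ℝ] W)

lemma inner_smul_map_smul (c : ℝ) (x : W) :
    inner ℝ (c • x) (H (c • x)) = c ^ 2 * inner ℝ x (H x) := by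
  rw [map_smul, real_inner_smul_left, real_inner_smul_right]
  ring

/-- One step of the Lyapunov argument: `x` is the new iterate, `p` the previous one, `y` the
extrapolated point and `τ` the current Nesterov parameter. -/
lemma lyapunov_step {θ : W → ℝ} (hθ : ConvexOn ℝ Set.univ θ) {τ : ℝ} (hτ : 1 ≤ τ)
    {x p y z wstar : W} (hz : z = (1 - 1 / τ) • p + (1 / τ) • wstar)
    (hdescent : θ x - θ z
      ≤ 1 / 2 * inner ℝ (z - y) (H (z - y)) - 1 / 2 * inner ℝ (z - x) (H (z - x))) :
    τ ^ 2 * (θ x - θ wstar)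
        + 1 / 2 * inner ℝ (τ • x - (τ - 1) • p - wstar) (H (τ • x - (τ - 1) • p - wstar))
      ≤ (τ ^ 2 - τ) * (θ p - θ wstar)
        + 1 / 2 * inner ℝ (τ • y - (τ - 1) • p - wstar) (H (τ • y - (τ - 1) • p - wstar)) := by
  have hτ0 : 0 < τ := by linarith
  have hsub : ∀ v : W, z - v = (-(1 / τ)) • (τ • v - (τ - 1) • p - wstar) := fun v => by
    rw [hz]
    match_scalars <;> field_simp
  rw [hsub x, hsub y, inner_smul_map_smul, inner_smul_map_smul] at hdescent
  have hconv : θ z ≤ (1 - 1 / τ) * θ p + (1 / τ) * θ wstar :=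
    hz ▸ hθ.2 (Set.mem_univ p) (Set.mem_univ wstar)
      (by rw [sub_nonneg]; exact div_le_one_of_le₀ hτ hτ0.le) (by positivity) (by ring)
  have hτsq : 0 ≤ τ ^ 2 := by positivity
  have hconv' : τ ^ 2 * θ z ≤ (τ ^ 2 - τ) * θ p + τ * θ wstar :=
    (mul_le_mul_of_nonneg_left hconv hτsq).trans_eq (by field_simp)
  have hdescent' := mul_le_mul_of_nonneg_left hdescent hτsq
  field_simp at hdescent'
  linarith

end Lyapunov

theorem mABCD_O_one_over_k_sq_general
    {W : Type*} [NormedAddCommGroup W] [InnerProductSpace ℝ W]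
    (θ : W → ℝ) (hθconv : ConvexOn ℝ Set.univ θ)
    (wstar : W) (hmin : ∀ w : W, θ wstar ≤ θ w)
    (t : ℕ → ℝ) (ht1 : t 1 = 1)
    (htrec : ∀ k ≥ 1, t (k + 1) = (1 + Real.sqrt (1 + 4 * t k ^ 2)) / 2)
    (H : W →ₗ[ℝ] W)
    (hHpsd : ∀ x : W, 0 ≤ (inner ℝ x (H x) : ℝ))
    (wt w : ℕ → W)
    (hw1 : w 1 = wt 0)
    (hwk : ∀ k ≥ 2, w k = wt (k - 1) + ((t (k - 1) - 1) / t k) • (wt (k - 1) - wt (k - 2)))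
    (hdescent : ∀ k ≥ 1, ∀ z : W,
      θ (wt k) - θ z
        ≤ 1 / 2 * (inner ℝ (z - w k) (H (z - w k)) : ℝ)
          - 1 / 2 * (inner ℝ (z - wt k) (H (z - wt k)) : ℝ)) :
    ∀ k : ℕ, 1 ≤ k →
      θ (wt k) - θ wstar
        ≤ 2 * (inner ℝ (wt 0 - wstar) (H (wt 0 - wstar)) : ℝ) / ((k : ℝ) + 1) ^ 2 := by
  have ht_ge := nesterov_ge_half_succ ht1 htrec
  set U : ℕ → W := fun k => t k • wt k - (t k - 1) • wt (k - 1) - wstar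
  have hlyapunov : ∀ k ≥ 1, t k ^ 2 * (θ (wt k) - θ wstar) + 1 / 2 * inner ℝ (U k) (H (U k))
      ≤ 1 / 2 * inner ℝ (wt 0 - wstar) (H (wt 0 - wstar)) := by
    intro k hk
    induction k, hk using Nat.le_induction with
    | base =>
      have h := lyapunov_step H hθconv le_rfl (p := wt 0) (wstar := wstar) rfl
        (hdescent 1 le_rfl _)
      simpa [U, ht1, hw1] using h
    | succ n hn ih =>
      have hτ : 1 ≤ t (n + 1) := by
        have := ht_ge (n + 1) (by omega)
        push_cast at this
        linarith [(Nat.cast_nonneg n : (0 : ℝ) ≤ n)]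
      have h := lyapunov_step H hθconv hτ (p := wt n) (wstar := wstar) rfl
        (hdescent (n + 1) (by omega) _)
      have hextrap : t (n + 1) • w (n + 1) - (t (n + 1) - 1) • wt n - wstar = U n := by
        rw [hwk (n + 1) (by omega), show n + 1 - 2 = n - 1 by omega, Nat.add_sub_cancel]
        match_scalars <;> field_simp; ring
      have hsq : t (n + 1) ^ 2 - t (n + 1) = t n ^ 2 := by
        rw [htrec n hn]
        exact nesterov_sq_sub_self _
      rw [hextrap, hsq] at h
      exact h.trans ih
  intro k hk
  have hgap : 0 ≤ θ (wt k) - θ wstar := sub_nonneg.mpr (hmin _)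
  have ht_sq : ((k + 1 : ℝ) / 2) ^ 2 ≤ t k ^ 2 := pow_le_pow_left₀ (by positivity) (ht_ge k hk) 2
  rw [le_div_iff₀ (by positivity)]
  linarith [mul_le_mul_of_nonneg_right ht_sq hgap, hlyapunov k hk, hHpsd (U k)]

/-- `O(1/k²)` complexity of the exact majorized accelerated BCD method:
if the iterates satisfy the one-cycle sufficient descent inequality and the
Nesterov extrapolation rule, then
`θ(w̃^k) - θ(w*) ≤ 2‖w̃^0 - w*‖²_H / (k+1)²`. -/
theorem mABCD_O_one_over_k_sq
    {W : Type*} [NormedAddCommGroup W] [InnerProductSpace ℝ W] [FiniteDimensional ℝ W]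
    (θ : W → ℝ) (hθconv : ConvexOn ℝ Set.univ θ)
    (wstar : W) (hmin : ∀ w : W, θ wstar ≤ θ w)
    (t : ℕ → ℝ) (ht1 : t 1 = 1)
    (htrec : ∀ k ≥ 1, t (k + 1) = (1 + Real.sqrt (1 + 4 * t k ^ 2)) / 2)
    (H : W →ₗ[ℝ] W)
    (hHsa : ∀ x y : W, (inner ℝ (H x) y : ℝ) = inner ℝ x (H y))
    (hHpsd : ∀ x : W, 0 ≤ (inner ℝ x (H x) : ℝ))
    (wt w : ℕ → W)
    (hw1 : w 1 = wt 0)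
    (hwk : ∀ k ≥ 2, w k = wt (k - 1) + ((t (k - 1) - 1) / t k) • (wt (k - 1) - wt (k - 2)))
    (hdescent : ∀ k ≥ 1, ∀ z : W,
      θ (wt k) - θ z
        ≤ 1 / 2 * (inner ℝ (z - w k) (H (z - w k)) : ℝ)
          - 1 / 2 * (inner ℝ (z - wt k) (H (z - wt k)) : ℝ)) :
    ∀ k : ℕ, 1 ≤ k →
      θ (wt k) - θ wstar
        ≤ 2 * (inner ℝ (wt 0 - wstar) (H (wt 0 - wstar)) : ℝ) / ((k : ℝ) + 1) ^ 2 :=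
  mABCD_O_one_over_k_sq_general θ hθconv wstar hmin t ht1 htrec H hHpsd wt w hw1 hwk hdescent
end

section
/- Let U, V be finite-dimensional real inner product spaces, p : U → ℝ ∪ {+∞} and q : V → ℝ ∪ {+∞} proper closed convex, and h : U × V → ℝ convex differentiable satisfying the two-sided quadratic bounds h(w') + ⟨∇h(w'), w-w'⟩ + (1/2)‖w-w'‖²_Q ≤ h(w) ≤ h(w') + ⟨∇h(w'), w-w'⟩ + (1/2)‖w-w'‖²_{Q̂} for all w, w', with Q̂ = Q + Diag(D₁, D₂) for self-adjoint positive semidefinite D₁, D₂ and block-positive-definite diagonal blocks Q̂₁₁, Q̂₂₂. Given a point w^k = (u^k, v^k), let ũ minimize p(u) + ĥ(u, v^k; w^k) over u, and ṽ minimize q(v) + ĥ(ũ, v; w^k) over v, where ĥ(w; w^k) is the quadratic majorant. Then with 𝓗 = Diag(D₁, D₂ + Q₂₂) and w̃ = (ũ, ṽ): θ(w̃) - θ(w) ≤ (1/2)‖w - w^k‖²_𝓗 - (1/2)‖w - w̃‖²_𝓗 for all w ∈ U × V, where θ(w) = h(w) + p(u) + q(v). -/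
/-!
Each block subproblem minimizes a convex function plus a quadratic whose curvature is `Q̂₁₁`,
resp. `Q̂₂₂`, so its minimizer has quadratic growth in that seminorm (compare the objective with
its values on the segment towards any other point and let the step go to zero). Chaining the two
growth inequalities through `ĥ(ũ, v)` leaves the coupling term
`⟪u - ũ, Q₁₂ (v - vᵏ)⟫ + ⟪v - vᵏ, Q₁₂* (u - ũ)⟫`, which `Q ⪰ 0` bounds by
`‖u - ũ‖²_{Q₁₁} + ‖v - vᵏ‖²_{Q₂₂}`. The upper bound gives `h(w̃) ≤ ĥ(w̃)`, and the lower bound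
gives `ĥ(w) ≤ h(w) + ½‖w - wᵏ‖²_{Diag(D₁, D₂)}`.
-/

open Set Filter Topology
open scoped RealInnerProductSpace

theorem le_of_forall_pos_lt_one_le_add_mul {a b c : ℝ}
    (h : ∀ t : ℝ, 0 < t → t < 1 → a ≤ b + t * c) : a ≤ b := by
  have hlim : Tendsto (fun t : ℝ => b + t * c) (𝓝[>] 0) (𝓝 b) := by
    have : Tendsto (fun t : ℝ => b + t * c) (𝓝 0) (𝓝 (b + 0 * c)) :=
      tendsto_const_nhds.add (tendsto_id.mul_const c)
    simpa using this.mono_left nhdsWithin_le_nhds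
  refine ge_of_tendsto hlim ?_
  filter_upwards [Ioo_mem_nhdsGT one_pos] with t ht using h t ht.1 ht.2

theorem ConvexOn.quadratic_growth_of_min_add_quadratic {E : Type*} [AddCommGroup E]
    [Module ℝ E] {p φ : E → ℝ} (hp : ConvexOn ℝ univ p) (ℓ : E →ₗ[ℝ] ℝ)
    (β : LinearMap.BilinForm ℝ E) {κ : ℝ} {c x₀ : E}
    (hφ : ∀ x, φ x = κ + ℓ (x - c) + 1 / 2 * β (x - c) (x - c))
    (hmin : ∀ x, p x₀ + φ x₀ ≤ p x + φ x) (x : E) :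
    p x₀ + φ x₀ + 1 / 2 * β (x - x₀) (x - x₀) ≤ p x + φ x := by
  set d := x - x₀
  set L := ℓ d + 1 / 2 * (β (x₀ - c) d + β d (x₀ - c))
  have hline : ∀ t : ℝ, φ (x₀ + t • d) = φ x₀ + t * L + t ^ 2 * (1 / 2 * β d d) := by
    intro t
    rw [hφ, hφ, show x₀ + t • d - c = (x₀ - c) + t • d by abel]
    simp only [map_add, map_smul, LinearMap.add_apply, LinearMap.smul_apply, smul_eq_mul, L]
    ring
  have hslope : p x₀ - p x ≤ L := by
    refine le_of_forall_pos_lt_one_le_add_mul (c := 1 / 2 * β d d) fun t ht0 ht1 => ?_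
    have hconv : p (x₀ + t • d) ≤ (1 - t) * p x₀ + t * p x := by
      have := hp.2 (mem_univ x₀) (mem_univ x) (sub_nonneg.2 ht1.le) ht0.le (sub_add_cancel 1 t)
      rwa [smul_eq_mul, smul_eq_mul,
        show (1 - t) • x₀ + t • x = x₀ + t • d by simp only [d]; module] at this
    have := hmin (x₀ + t • d)
    rw [hline] at this
    have : t * (p x₀ - p x) ≤ t * (L + t * (1 / 2 * β d d)) := by linarith
    exact le_of_mul_le_mul_left this ht0
  have := hline 1
  rw [one_smul, add_sub_cancel x₀ x] at this
  linarith

section BlockModel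

variable {U V : Type*} [NormedAddCommGroup U] [InnerProductSpace ℝ U]
  [NormedAddCommGroup V] [InnerProductSpace ℝ V]

noncomputable def blockQuad (A₁₁ : U →ₗ[ℝ] U) (A₁₂ : V →ₗ[ℝ] U) (A₂₁ : U →ₗ[ℝ] V)
    (A₂₂ : V →ₗ[ℝ] V) (w : U × V) : ℝ :=
  ⟪w.1, A₁₁ w.1⟫ + ⟪w.1, A₁₂ w.2⟫ + ⟪w.2, A₂₁ w.1⟫ + ⟪w.2, A₂₂ w.2⟫

/-- `ĥ(·; wᵏ)` in coordinates centred at `wᵏ`: `ĥ(w; wᵏ) = quadModel (h wᵏ) (∇h wᵏ) Q̂ (w - wᵏ)`. -/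
noncomputable def quadModel (κ : ℝ) (g : U × V) (A₁₁ : U →ₗ[ℝ] U) (A₁₂ : V →ₗ[ℝ] U)
    (A₂₁ : U →ₗ[ℝ] V) (A₂₂ : V →ₗ[ℝ] V) (w : U × V) : ℝ :=
  κ + (⟪g.1, w.1⟫ + ⟪g.2, w.2⟫) + 1 / 2 * blockQuad A₁₁ A₁₂ A₂₁ A₂₂ w

variable {κ : ℝ} {g : U × V} {A₁₁ : U →ₗ[ℝ] U} {A₁₂ : V →ₗ[ℝ] U} {A₂₁ : U →ₗ[ℝ] V}
  {A₂₂ : V →ₗ[ℝ] V}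

theorem quadModel_swap (w : U × V) :
    quadModel κ g A₁₁ A₁₂ A₂₁ A₂₂ w = quadModel κ g.swap A₂₂ A₂₁ A₁₂ A₁₁ w.swap := by
  simp only [quadModel, blockQuad, Prod.fst_swap, Prod.snd_swap]
  ring

theorem quadModel_mk (a : U) (b : V) :
    quadModel κ g A₁₁ A₁₂ A₂₁ A₂₂ (a, b) = quadModel κ g A₁₁ A₁₂ A₂₁ A₂₂ (0, b)
      + (⟪g.1, a⟫ + 1 / 2 * (⟪a, A₁₂ b⟫ + ⟪b, A₂₁ a⟫)) + 1 / 2 * ⟪a, A₁₁ a⟫ := by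
  simp only [quadModel, blockQuad, map_zero, inner_zero_left, inner_zero_right]
  ring

theorem quadModel_exchange (a a' : U) (b : V) :
    quadModel κ g A₁₁ A₁₂ A₂₁ A₂₂ (a, b) + quadModel κ g A₁₁ A₁₂ A₂₁ A₂₂ (a', 0)
      + 1 / 2 * (⟪a' - a, A₁₂ b⟫ + ⟪b, A₂₁ (a' - a)⟫)
      = quadModel κ g A₁₁ A₁₂ A₂₁ A₂₂ (a', b) + quadModel κ g A₁₁ A₁₂ A₂₁ A₂₂ (a, 0) := by
  rw [quadModel_mk a b, quadModel_mk a' b, quadModel_mk a 0, quadModel_mk a' 0]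
  simp only [map_sub, map_zero, inner_sub_left, inner_sub_right, inner_zero_left,
    inner_zero_right]
  ring

theorem ConvexOn.quadModel_fst_quadratic_growth {p : U → ℝ} (hp : ConvexOn ℝ univ p)
    (c : U) (b : V) {u₀ : U}
    (hmin : ∀ u, p u₀ + quadModel κ g A₁₁ A₁₂ A₂₁ A₂₂ (u₀ - c, b)
      ≤ p u + quadModel κ g A₁₁ A₁₂ A₂₁ A₂₂ (u - c, b)) (u : U) :
    p u₀ + quadModel κ g A₁₁ A₁₂ A₂₁ A₂₂ (u₀ - c, b) + 1 / 2 * ⟪u - u₀, A₁₁ (u - u₀)⟫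
      ≤ p u + quadModel κ g A₁₁ A₁₂ A₂₁ A₂₂ (u - c, b) := by
  let ℓ : U →ₗ[ℝ] ℝ :=
    innerₗ U g.1 + (1 / 2 : ℝ) • ((innerₗ U).flip (A₁₂ b) + innerₗ V b ∘ₗ A₂₁)
  have hφ : ∀ u, quadModel κ g A₁₁ A₁₂ A₂₁ A₂₂ (u - c, b)
      = quadModel κ g A₁₁ A₁₂ A₂₁ A₂₂ (0, b) + ℓ (u - c)
        + 1 / 2 * ((innerₗ U).compl₂ A₁₁) (u - c) (u - c) := by
    intro u
    rw [quadModel_mk]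
    simp only [ℓ, LinearMap.add_apply, LinearMap.smul_apply, LinearMap.flip_apply,
      LinearMap.comp_apply, LinearMap.compl₂_apply, innerₗ_apply_apply, smul_eq_mul,
      real_inner_comm (A₁₂ b)]
  simpa only [LinearMap.compl₂_apply, innerₗ_apply_apply] using
    hp.quadratic_growth_of_min_add_quadratic ℓ _ hφ hmin u

theorem ConvexOn.quadModel_snd_quadratic_growth {q : V → ℝ} (hq : ConvexOn ℝ univ q)
    (a : U) (c : V) {v₀ : V}
    (hmin : ∀ v, q v₀ + quadModel κ g A₁₁ A₁₂ A₂₁ A₂₂ (a, v₀ - c)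
      ≤ q v + quadModel κ g A₁₁ A₁₂ A₂₁ A₂₂ (a, v - c)) (v : V) :
    q v₀ + quadModel κ g A₁₁ A₁₂ A₂₁ A₂₂ (a, v₀ - c) + 1 / 2 * ⟪v - v₀, A₂₂ (v - v₀)⟫
      ≤ q v + quadModel κ g A₁₁ A₁₂ A₂₁ A₂₂ (a, v - c) := by
  simp only [quadModel_swap (A₁₁ := A₁₁), Prod.swap_prod_mk] at hmin ⊢
  exact hq.quadModel_fst_quadratic_growth c a hmin v

end BlockModel

theorem mABCD_one_cycle_descent_general
    {U V : Type*} [NormedAddCommGroup U] [InnerProductSpace ℝ U]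
    [NormedAddCommGroup V] [InnerProductSpace ℝ V]
    -- the nonsmooth blocks
    (p : U → ℝ) (hpconv : ConvexOn ℝ Set.univ p)
    (q : V → ℝ) (hqconv : ConvexOn ℝ Set.univ q)
    -- the smooth coupled function and its gradient
    (h : U × V → ℝ)
    (g : U × V → U × V)
    -- the blocks of Q and the proximal blocks D₁, D₂
    (Q11 : U →ₗ[ℝ] U) (Q12 : V →ₗ[ℝ] U) (Q12s : U →ₗ[ℝ] V) (Q22 : V →ₗ[ℝ] V)
    (D1 : U →ₗ[ℝ] U) (D2 : V →ₗ[ℝ] V)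
    -- the quadratic forms of Q and Q̂ = Q + Diag(D₁, D₂)
    (quadQ quadQhat : U × V → ℝ)
    (hquadQ : ∀ w : U × V, quadQ w
      = (inner ℝ w.1 (Q11 w.1) : ℝ) + (inner ℝ w.1 (Q12 w.2) : ℝ)
        + (inner ℝ w.2 (Q12s w.1) : ℝ) + (inner ℝ w.2 (Q22 w.2) : ℝ))
    (hquadQhat : ∀ w : U × V, quadQhat w
      = quadQ w + (inner ℝ w.1 (D1 w.1) : ℝ) + (inner ℝ w.2 (D2 w.2) : ℝ))
    -- Q positive semidefinite, Q̂₁₁ ≻ 0, Q̂₂₂ ≻ 0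
    (hQpsd : ∀ w : U × V, 0 ≤ quadQ w)
    -- the two-sided quadratic bounds (6)
    (hlower : ∀ w w' : U × V,
      h w' + ((inner ℝ (g w').1 (w.1 - w'.1) : ℝ) + (inner ℝ (g w').2 (w.2 - w'.2) : ℝ))
        + 1 / 2 * quadQ (w - w') ≤ h w)
    (hupper : ∀ w w' : U × V,
      h w ≤ h w' + ((inner ℝ (g w').1 (w.1 - w'.1) : ℝ) + (inner ℝ (g w').2 (w.2 - w'.2) : ℝ))
        + 1 / 2 * quadQhat (w - w'))
    -- the current point and the quadratic majorant ĥ(·; w^k)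
    (wk : U × V)
    (hhat : U × V → ℝ)
    (hhhat : ∀ w : U × V, hhat w
      = h wk + ((inner ℝ (g wk).1 (w.1 - wk.1) : ℝ) + (inner ℝ (g wk).2 (w.2 - wk.2) : ℝ))
        + 1 / 2 * quadQhat (w - wk))
    -- the exact block minimizers of the majorized subproblems
    (ut : U) (vt : V)
    (hut : ∀ u : U, p ut + hhat (ut, wk.2) ≤ p u + hhat (u, wk.2))
    (hvt : ∀ v : V, q vt + hhat (ut, vt) ≤ q v + hhat (ut, v)) :
    -- conclusion: sufficient descent in the 𝓗 = Diag(D₁, D₂ + Q₂₂) seminorm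
    ∀ w : U × V,
      (h (ut, vt) + p ut + q vt) - (h w + p w.1 + q w.2)
        ≤ 1 / 2 * ((inner ℝ (w.1 - wk.1) (D1 (w.1 - wk.1)) : ℝ)
              + (inner ℝ (w.2 - wk.2) (D2 (w.2 - wk.2)) : ℝ)
              + (inner ℝ (w.2 - wk.2) (Q22 (w.2 - wk.2)) : ℝ))
          - 1 / 2 * ((inner ℝ (w.1 - ut) (D1 (w.1 - ut)) : ℝ)
              + (inner ℝ (w.2 - vt) (D2 (w.2 - vt)) : ℝ)
              + (inner ℝ (w.2 - vt) (Q22 (w.2 - vt)) : ℝ)) := by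
  obtain ⟨uk, vk⟩ := wk
  rintro ⟨u, v⟩
  set M := quadModel (h (uk, vk)) (g (uk, vk)) (Q11 + D1) Q12 Q12s (Q22 + D2)
  have hM : ∀ x y, hhat (x, y) = M (x - uk, y - vk) := by
    intro x y
    simp only [hhhat, hquadQhat, hquadQ, M, quadModel, blockQuad, LinearMap.add_apply,
      inner_add_right, Prod.mk_sub_mk]
    ring
  have hdesc_u := hpconv.quadModel_fst_quadratic_growth uk (vk - vk)
    (fun u => by simpa only [hM] using hut u) u
  have hdesc_v := hqconv.quadModel_snd_quadratic_growth (ut - uk) vk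
    (fun v => by simpa only [hM] using hvt v) v
  have hexchange := quadModel_exchange (κ := h (uk, vk)) (g := g (uk, vk)) (A₁₁ := Q11 + D1)
    (A₁₂ := Q12) (A₂₁ := Q12s) (A₂₂ := Q22 + D2) (ut - uk) (u - uk) (v - vk)
  rw [sub_sub_sub_cancel_right] at hexchange
  have hcross := hQpsd (u - ut, v - vk)
  have hup : h (ut, vt) ≤ M (ut - uk, vt - vk) := hM ut vt ▸ hhhat (ut, vt) ▸ hupper _ _
  have hlo : M (u - uk, v - vk) ≤ h (u, v)
      + 1 / 2 * (⟪u - uk, D1 (u - uk)⟫ + ⟪v - vk, D2 (v - vk)⟫) := by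
    have := hlower (u, v) (uk, vk)
    rw [← hM, hhhat, hquadQhat]
    simp only [Prod.mk_sub_mk] at this ⊢
    linarith
  simp only [hquadQ, LinearMap.add_apply, inner_add_right, sub_self] at hcross hdesc_u hdesc_v ⊢
  linarith

/-- Lemma 2: one-cycle sufficient descent of the exact majorized two-block
coordinate descent method. The inner product on `U × V` is the componentwise
sum; `𝓗 = Diag(D₁, D₂ + Q₂₂)`. -/
theorem mABCD_one_cycle_descent
    {U V : Type*} [NormedAddCommGroup U] [InnerProductSpace ℝ U] [FiniteDimensional ℝ U]
    [NormedAddCommGroup V] [InnerProductSpace ℝ V] [FiniteDimensional ℝ V]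
    -- the nonsmooth blocks
    (p : U → ℝ) (hpconv : ConvexOn ℝ Set.univ p) (hplsc : LowerSemicontinuous p)
    (q : V → ℝ) (hqconv : ConvexOn ℝ Set.univ q) (hqlsc : LowerSemicontinuous q)
    -- the smooth coupled function and its gradient
    (h : U × V → ℝ) (hconv : ConvexOn ℝ Set.univ h)
    (g : U × V → U × V)
    (hgrad : ∀ w : U × V, HasFDerivAt h
      (((innerSL ℝ (g w).1).comp (ContinuousLinearMap.fst ℝ U V))
        + ((innerSL ℝ (g w).2).comp (ContinuousLinearMap.snd ℝ U V))) w)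
    -- the blocks of Q and the proximal blocks D₁, D₂
    (Q11 : U →ₗ[ℝ] U) (Q12 : V →ₗ[ℝ] U) (Q12s : U →ₗ[ℝ] V) (Q22 : V →ₗ[ℝ] V)
    (D1 : U →ₗ[ℝ] U) (D2 : V →ₗ[ℝ] V)
    (hQ11sa : ∀ x y : U, (inner ℝ (Q11 x) y : ℝ) = inner ℝ x (Q11 y))
    (hQ11psd : ∀ x : U, 0 ≤ (inner ℝ x (Q11 x) : ℝ))
    (hQ22sa : ∀ x y : V, (inner ℝ (Q22 x) y : ℝ) = inner ℝ x (Q22 y))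
    (hQ22psd : ∀ x : V, 0 ≤ (inner ℝ x (Q22 x) : ℝ))
    (hadj : ∀ (x : U) (y : V), (inner ℝ (Q12 y) x : ℝ) = inner ℝ y (Q12s x))
    (hD1sa : ∀ x y : U, (inner ℝ (D1 x) y : ℝ) = inner ℝ x (D1 y))
    (hD1psd : ∀ x : U, 0 ≤ (inner ℝ x (D1 x) : ℝ))
    (hD2sa : ∀ x y : V, (inner ℝ (D2 x) y : ℝ) = inner ℝ x (D2 y))
    (hD2psd : ∀ x : V, 0 ≤ (inner ℝ x (D2 x) : ℝ))
    -- the quadratic forms of Q and Q̂ = Q + Diag(D₁, D₂)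
    (quadQ quadQhat : U × V → ℝ)
    (hquadQ : ∀ w : U × V, quadQ w
      = (inner ℝ w.1 (Q11 w.1) : ℝ) + (inner ℝ w.1 (Q12 w.2) : ℝ)
        + (inner ℝ w.2 (Q12s w.1) : ℝ) + (inner ℝ w.2 (Q22 w.2) : ℝ))
    (hquadQhat : ∀ w : U × V, quadQhat w
      = quadQ w + (inner ℝ w.1 (D1 w.1) : ℝ) + (inner ℝ w.2 (D2 w.2) : ℝ))
    -- Q positive semidefinite, Q̂₁₁ ≻ 0, Q̂₂₂ ≻ 0
    (hQpsd : ∀ w : U × V, 0 ≤ quadQ w)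
    (hQ11hatpd : ∀ x : U, x ≠ 0 → 0 < (inner ℝ x (Q11 x) : ℝ) + (inner ℝ x (D1 x) : ℝ))
    (hQ22hatpd : ∀ x : V, x ≠ 0 → 0 < (inner ℝ x (Q22 x) : ℝ) + (inner ℝ x (D2 x) : ℝ))
    -- the two-sided quadratic bounds (6)
    (hlower : ∀ w w' : U × V,
      h w' + ((inner ℝ (g w').1 (w.1 - w'.1) : ℝ) + (inner ℝ (g w').2 (w.2 - w'.2) : ℝ))
        + 1 / 2 * quadQ (w - w') ≤ h w)
    (hupper : ∀ w w' : U × V,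
      h w ≤ h w' + ((inner ℝ (g w').1 (w.1 - w'.1) : ℝ) + (inner ℝ (g w').2 (w.2 - w'.2) : ℝ))
        + 1 / 2 * quadQhat (w - w'))
    -- the current point and the quadratic majorant ĥ(·; w^k)
    (wk : U × V)
    (hhat : U × V → ℝ)
    (hhhat : ∀ w : U × V, hhat w
      = h wk + ((inner ℝ (g wk).1 (w.1 - wk.1) : ℝ) + (inner ℝ (g wk).2 (w.2 - wk.2) : ℝ))
        + 1 / 2 * quadQhat (w - wk))
    -- the exact block minimizers of the majorized subproblems
    (ut : U) (vt : V)
    (hut : ∀ u : U, p ut + hhat (ut, wk.2) ≤ p u + hhat (u, wk.2))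
    (hvt : ∀ v : V, q vt + hhat (ut, vt) ≤ q v + hhat (ut, v)) :
    -- conclusion: sufficient descent in the 𝓗 = Diag(D₁, D₂ + Q₂₂) seminorm
    ∀ w : U × V,
      (h (ut, vt) + p ut + q vt) - (h w + p w.1 + q w.2)
        ≤ 1 / 2 * ((inner ℝ (w.1 - wk.1) (D1 (w.1 - wk.1)) : ℝ)
              + (inner ℝ (w.2 - wk.2) (D2 (w.2 - wk.2)) : ℝ)
              + (inner ℝ (w.2 - wk.2) (Q22 (w.2 - wk.2)) : ℝ))
          - 1 / 2 * ((inner ℝ (w.1 - ut) (D1 (w.1 - ut)) : ℝ)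
              + (inner ℝ (w.2 - vt) (D2 (w.2 - vt)) : ℝ)
              + (inner ℝ (w.2 - vt) (Q22 (w.2 - vt)) : ℝ)) :=
  mABCD_one_cycle_descent_general p hpconv q hqconv h g Q11 Q12 Q12s Q22 D1 D2 quadQ quadQhat hquadQ
    hquadQhat hQpsd hlower hupper wk hhat hhhat ut vt hut hvt
end
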